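/- With the numerator N and denominator D defined as below, for every l ∈ L and each choice of sign there exists an assignment (x,y) ∈ {0,1}^n × {0,1}^L with D(x,y) = 1 and N(x,y) = Σ_{k∈K_l} a_{l,k} (respectively N(x,y) = − Σ_{k∈K_l} a_{l,k}). Consequently, the supremum of N(x,y)/D(x,y) over all assignments with D(x,y) ≠ 0 is at least max_{l∈L} max( Σ_{k∈K_l} a_{l,k}, − Σ_{k∈K_l} a_{l,k} ). -/

import Mathlib

/-!
Fix `x` and set `y_{l'} = x_{i_{l'}} x_{j_{l'}}` for every pair `l' ≠ l`. On binary inputs the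
Rosenberg penalty vanishes at `y = a·b`, and so does the numerator term of `l'`; hence `N` and `D`
only see the pair `l`. Taking `x ≡ 1, y_l = 0` gives `D = 1, N = Σ_k a_{l,k}`; taking
`x_{i_l} = 0`, all other `x_m = 1` and `y_l = 1` gives `D = 1, N = -Σ_k a_{l,k}`, since `j_l` and
the indices in `K_l` differ from `i_l`. Both values are ratios from a finite set of reals, so they
lie below its supremum.
-/

/-- The Rosenberg penalty `p(a,b,y) = a·b − 2·a·y − 2·b·y + 3·y` on real arguments. -/
noncomputable def rosP (a b y : ℝ) : ℝ := a * b - 2 * a * y - 2 * b * y + 3 * y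

lemma Fin.two_cast_mul (a b : Fin 2) : (((a * b : Fin 2) : ℕ) : ℝ) = (a : ℕ) * (b : ℕ) := by
  fin_cases a <;> fin_cases b <;> simp

lemma rosP_mul_eq_zero (a b : Fin 2) :
    rosP ((a : ℕ) : ℝ) ((b : ℕ) : ℝ) (((a * b : Fin 2) : ℕ) : ℝ) = 0 := by
  fin_cases a <;> fin_cases b <;> norm_num [rosP]

namespace Quadratization

variable {n : ℕ} {L : Type*} [Fintype L] (i j : L → Fin n) (K : L → Finset (Fin n))
  (a : L → Fin n → ℝ)

noncomputable def numer (x : Fin n → Fin 2) (y : L → Fin 2) : ℝ :=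
  ∑ l : L, ∑ k ∈ K l, a l k * (((x (i l) : ℕ) : ℝ) * ((x (j l) : ℕ) : ℝ) * ((x k : ℕ) : ℝ) -
    ((y l : ℕ) : ℝ) * ((x k : ℕ) : ℝ))

noncomputable def denom (x : Fin n → Fin 2) (y : L → Fin 2) : ℝ :=
  ∑ l : L, rosP ((x (i l) : ℕ) : ℝ) ((x (j l) : ℕ) : ℝ) ((y l : ℕ) : ℝ)

def localizedAux [DecidableEq L] (x : Fin n → Fin 2) (l : L) (v : Fin 2) : L → Fin 2 :=
  Function.update (fun l' => x (i l') * x (j l')) l v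

lemma denom_localizedAux [DecidableEq L] (x : Fin n → Fin 2) (l : L) (v : Fin 2) :
    denom i j x (localizedAux i j x l v) =
      rosP ((x (i l) : ℕ) : ℝ) ((x (j l) : ℕ) : ℝ) ((v : ℕ) : ℝ) := by
  rw [denom, Finset.sum_eq_single l]
  · simp [localizedAux]
  · intro l' _ hl'
    simp only [localizedAux, Function.update_of_ne hl', rosP_mul_eq_zero]
  · simp

lemma numer_localizedAux [DecidableEq L] (x : Fin n → Fin 2) (l : L) (v : Fin 2) :
    numer i j K a x (localizedAux i j x l v) =
      ∑ k ∈ K l, a l k * (((x (i l) : ℕ) : ℝ) * ((x (j l) : ℕ) : ℝ) * ((x k : ℕ) : ℝ) -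
        ((v : ℕ) : ℝ) * ((x k : ℕ) : ℝ)) := by
  rw [numer, Finset.sum_eq_single l]
  · simp [localizedAux]
  · intro l' _ hl'
    refine Finset.sum_eq_zero fun k _ => ?_
    simp only [localizedAux, Function.update_of_ne hl', Fin.two_cast_mul]
    ring
  · simp

lemma exists_denom_eq_one_numer_eq_sum (l : L) :
    ∃ x y, denom i j x y = 1 ∧ numer i j K a x y = ∑ k ∈ K l, a l k := by
  classical
  refine ⟨fun _ => 1, localizedAux i j (fun _ => 1) l 0, ?_, ?_⟩
  · rw [denom_localizedAux]
    norm_num [rosP]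
  · rw [numer_localizedAux]
    simp

lemma exists_denom_eq_one_numer_eq_neg_sum {l : L} (hij : i l ≠ j l) (hK : i l ∉ K l) :
    ∃ x y, denom i j x y = 1 ∧ numer i j K a x y = -∑ k ∈ K l, a l k := by
  classical
  set x : Fin n → Fin 2 := Function.update (fun _ => 1) (i l) 0
  have hxi : x (i l) = 0 := Function.update_self _ _ _
  have hxj : x (j l) = 1 := Function.update_of_ne hij.symm _ _
  have hxK : ∀ k ∈ K l, x k = 1 := fun k hk =>
    Function.update_of_ne (by rintro rfl; exact hK hk) _ _
  refine ⟨x, localizedAux i j x l 1, ?_, ?_⟩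
  · rw [denom_localizedAux, hxi, hxj]
    norm_num [rosP]
  · rw [numer_localizedAux, ← Finset.sum_neg_distrib]
    exact Finset.sum_congr rfl fun k hk => by simp [hxi, hxK k hk]

end Quadratization

lemma le_csSup_of_denom_eq_one {α β : Type*} [Finite α] [Finite β] (N D : α → β → ℝ)
    {x : α} {y : β} (h : D x y = 1) :
    N x y ≤ sSup {r : ℝ | ∃ x y, D x y ≠ 0 ∧ r = N x y / D x y} := by
  have hbdd : BddAbove {r : ℝ | ∃ x y, D x y ≠ 0 ∧ r = N x y / D x y} := by
    refine ((Set.finite_range fun p : α × β => N p.1 p.2 / D p.1 p.2).subset ?_).bddAbove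
    rintro r ⟨x, y, _, rfl⟩
    exact ⟨(x, y), rfl⟩
  exact le_csSup hbdd ⟨x, y, by simp [h], by simp [h]⟩

theorem stmt_15_general (n : ℕ)
    {L : Type*} [Fintype L] [Nonempty L]
    (i j : L → Fin n) (hij : ∀ l : L, i l ≠ j l)
    (K : L → Finset (Fin n)) (hK : ∀ l : L, i l ∉ K l ∧ j l ∉ K l)
    (a : L → Fin n → ℝ)
    (N : (Fin n → Fin 2) → (L → Fin 2) → ℝ)
    (hN : ∀ x y, N x y = ∑ l : L, ∑ k ∈ K l,
      a l k * (((x (i l) : ℕ) : ℝ) * ((x (j l) : ℕ) : ℝ) * ((x k : ℕ) : ℝ) -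
        ((y l : ℕ) : ℝ) * ((x k : ℕ) : ℝ)))
    (D : (Fin n → Fin 2) → (L → Fin 2) → ℝ)
    (hD : ∀ x y, D x y = ∑ l : L,
      rosP ((x (i l) : ℕ) : ℝ) ((x (j l) : ℕ) : ℝ) ((y l : ℕ) : ℝ)) :
    (∀ l : L,
      (∃ x y, D x y = 1 ∧ N x y = ∑ k ∈ K l, a l k) ∧
      (∃ x y, D x y = 1 ∧ N x y = -∑ k ∈ K l, a l k)) ∧
    sSup {r : ℝ | ∃ x y, D x y ≠ 0 ∧ r = N x y / D x y} ≥
      Finset.univ.sup' Finset.univ_nonempty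
        (fun l : L => max (∑ k ∈ K l, a l k) (-∑ k ∈ K l, a l k)) := by
  obtain rfl : N = Quadratization.numer i j K a := funext₂ hN
  obtain rfl : D = Quadratization.denom i j := funext₂ hD
  have witnesses := fun l : L =>
    And.intro (Quadratization.exists_denom_eq_one_numer_eq_sum i j K a l)
      (Quadratization.exists_denom_eq_one_numer_eq_neg_sum i j K a (hij l) (hK l).1)
  refine ⟨witnesses, Finset.sup'_le _ _ fun l _ => max_le ?_ ?_⟩
  · obtain ⟨x, y, hD1, hN1⟩ := (witnesses l).1
    exact hN1 ▸ le_csSup_of_denom_eq_one _ _ hD1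
  · obtain ⟨x, y, hD1, hN1⟩ := (witnesses l).2
    exact hN1 ▸ le_csSup_of_denom_eq_one _ _ hD1

/-- Let `n ≥ 1` and `L` a finite nonempty set of substituted pairs
`{i_l, j_l}` (distinct indices, pairwise-distinct pairs), each with a set `K_l` of third
indices disjoint from `{i_l, j_l}` and coefficients `a_{l,k}`.  With the numerator
`N(x,y) = Σ_l Σ_{k∈K_l} a_{l,k}·(x_{i_l} x_{j_l} x_k − y_l x_k)` and denominator
`D(x,y) = Σ_l p(x_{i_l}, x_{j_l}, y_l)`, for every `l` and each choice of sign there is an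
assignment with `D = 1` and `N = Σ_{k∈K_l} a_{l,k}` (resp. `N = −Σ_{k∈K_l} a_{l,k}`);
consequently `sup { N/D : D ≠ 0 } ≥ max_l max(Σ_{k∈K_l} a_{l,k}, −Σ_{k∈K_l} a_{l,k})`. -/
theorem stmt_15 (n : ℕ) (hn : 1 ≤ n)
    {L : Type*} [Fintype L] [Nonempty L]
    (i j : L → Fin n) (hij : ∀ l : L, i l ≠ j l)
    (hdist : ∀ l l' : L, l ≠ l' → ({i l, j l} : Finset (Fin n)) ≠ {i l', j l'})
    (K : L → Finset (Fin n)) (hK : ∀ l : L, i l ∉ K l ∧ j l ∉ K l)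
    (a : L → Fin n → ℝ)
    (N : (Fin n → Fin 2) → (L → Fin 2) → ℝ)
    (hN : ∀ x y, N x y = ∑ l : L, ∑ k ∈ K l,
      a l k * (((x (i l) : ℕ) : ℝ) * ((x (j l) : ℕ) : ℝ) * ((x k : ℕ) : ℝ) -
        ((y l : ℕ) : ℝ) * ((x k : ℕ) : ℝ)))
    (D : (Fin n → Fin 2) → (L → Fin 2) → ℝ)
    (hD : ∀ x y, D x y = ∑ l : L,
      rosP ((x (i l) : ℕ) : ℝ) ((x (j l) : ℕ) : ℝ) ((y l : ℕ) : ℝ)) :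
    (∀ l : L,
      (∃ x y, D x y = 1 ∧ N x y = ∑ k ∈ K l, a l k) ∧
      (∃ x y, D x y = 1 ∧ N x y = -∑ k ∈ K l, a l k)) ∧
    sSup {r : ℝ | ∃ x y, D x y ≠ 0 ∧ r = N x y / D x y} ≥
      Finset.univ.sup' Finset.univ_nonempty
        (fun l : L => max (∑ k ∈ K l, a l k) (-∑ k ∈ K l, a l k)) :=
  stmt_15_general n i j hij K hK a N hN D hD
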